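/- arXiv:dg-ga/9612016 — 2 statements merged into one kernel-verified Lean document; each statement's English description precedes it below -/
import Mathlib

section
/- Let R be a commutative ring containing ℚ, and let α, β, γ ∈ R. Define the formal power series c(t) = exp[αt + Σ_{n≥2} (αβ^{n-1} + 2γβ^{n-2}) t^{2n-1}/(2n-1) + Σ_{n≥1} β^n t^{2n}/(2n)] in R[[t]]. Then c(t) satisfies the differential equation (1 - βt²)·c'(t) = (α + βt + 2γt²)·c(t). -/
/-!
The series `c` is `exp ∘ E` for the exponent `E`, so the chain rule gives `c' = E' c`, and it
remains to see `(1 - βt²) E' = α + βt + 2γt²`: the coefficients `d_n` of `E'` satisfy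
`d_{n+2} = β d_n` for `n ≥ 1`, so multiplying by `1 - βt²` leaves only the terms of
degree `≤ 2`.
-/

open Finset PowerSeries

namespace PowerSeries

theorem coeff_pow_eq_zero_of_lt {R : Type*} [CommSemiring R] {f : R⟦X⟧}
    (hf : constantCoeff f = 0) {m n : ℕ} (h : n < m) :
    coeff n (f ^ m) = 0 :=
  X_pow_dvd_iff.mp (pow_dvd_pow_of_dvd (X_dvd_iff.mpr hf) m) n h

variable {R : Type*} [CommRing R]

theorem coeff_exp_subst [Algebra ℚ R] {f : R⟦X⟧} (hf : constantCoeff f = 0) (n : ℕ) :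
    coeff n ((exp R).subst f) =
      ∑ m ∈ range (n + 1), ((Nat.factorial m : ℚ)⁻¹) • coeff n (f ^ m) := by
  rw [coeff_subst' (HasSubst.of_constantCoeff_zero' hf),
    finsum_eq_sum_of_support_subset _ (s := range (n + 1)) fun m hm => ?_]
  · refine sum_congr rfl fun m _ => ?_
    rw [coeff_exp, algebraMap_smul, one_div]
  · by_contra hmn
    simp only [coe_range, Set.mem_Iio, not_lt] at hmn
    exact hm (smul_eq_zero_of_right _ (coeff_pow_eq_zero_of_lt hf (by omega)))

theorem derivative_exp_subst [Algebra ℚ R] {f : R⟦X⟧} (hf : constantCoeff f = 0) :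
    d⁄dX R ((exp R).subst f) = (exp R).subst f * d⁄dX R f := by
  rw [derivative_subst (HasSubst.of_constantCoeff_zero' hf), derivative_exp]

theorem coeff_one_sub_C_mul_X_sq_mul_add_two (β : R) (f : R⟦X⟧) (n : ℕ) :
    coeff (n + 2) ((1 - C β * X ^ 2) * f) = coeff (n + 2) f - β * coeff n f := by
  rw [sub_mul, one_mul, mul_assoc, map_sub, coeff_C_mul, coeff_X_pow_mul]

theorem one_sub_C_mul_X_sq_mul_eq {β : R} {f : R⟦X⟧}
    (hf : ∀ n, 1 ≤ n → coeff (n + 2) f = β * coeff n f) :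
    (1 - C β * X ^ 2) * f =
      C (coeff 0 f) + C (coeff 1 f) * X + C (coeff 2 f - β * coeff 0 f) * X ^ 2 := by
  ext n
  rcases n with _ | _ | _ | n
  · simp
  · simp [sub_mul, mul_assoc, coeff_X_pow_mul']
  · simp [-map_sub, coeff_one_sub_C_mul_X_sq_mul_add_two]
  · simp [-map_sub, coeff_one_sub_C_mul_X_sq_mul_add_two, hf (n + 1) (by omega)]

end PowerSeries

section ChernExponent

variable {R : Type*} [CommRing R] [Algebra ℚ R]

theorem inv_natCast_smul_mul_natCast {k : ℕ} (hk : k ≠ 0) (x : R) :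
    ((k : ℚ)⁻¹ • x) * (k : R) = x := by
  rw [smul_mul_assoc, mul_comm, ← nsmul_eq_mul, ← Nat.cast_smul_eq_nsmul ℚ, smul_smul,
    inv_mul_cancel₀ (by exact_mod_cast hk), one_smul]

/-- The exponent
`αt + Σ_{n≥2} (αβ^{n-1} + 2γβ^{n-2}) t^{2n-1}/(2n-1) + Σ_{n≥1} β^n t^{2n}/(2n)`,
written coefficientwise: `k = 2n - 1` or `k = 2n`. -/
noncomputable def chernExponent (α β γ : R) : R⟦X⟧ :=
  PowerSeries.mk fun k =>
    if k = 0 then 0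
    else if k = 1 then α
    else if k % 2 = 1 then
      ((k : ℚ)⁻¹) • (α * β ^ ((k - 1) / 2) + 2 * γ * β ^ ((k - 1) / 2 - 1))
    else ((k : ℚ)⁻¹) • β ^ (k / 2)

variable (α β γ : R)

theorem constantCoeff_chernExponent : constantCoeff (chernExponent α β γ) = 0 := by
  simp [chernExponent, ← coeff_zero_eq_constantCoeff_apply]

theorem coeff_derivative_chernExponent (n : ℕ) :
    coeff n (d⁄dX R (chernExponent α β γ)) =
      if n = 0 then α
      else if n % 2 = 1 then β ^ ((n + 1) / 2)
      else α * β ^ (n / 2) + 2 * γ * β ^ (n / 2 - 1) := by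
  rw [coeff_derivative, chernExponent, coeff_mk, ← Nat.cast_succ]
  rcases n.eq_zero_or_pos with rfl | hn
  · simp
  rcases Nat.mod_two_eq_zero_or_one n with hev | hodd
  · rw [if_neg (by omega), if_neg (by omega), if_pos (by omega), inv_natCast_smul_mul_natCast
      (by omega), if_neg (by omega), if_neg (by omega), Nat.add_sub_cancel]
  · rw [if_neg (by omega), if_neg (by omega), if_neg (by omega), inv_natCast_smul_mul_natCast
      (by omega), if_neg (by omega), if_pos hodd]

theorem coeff_derivative_chernExponent_add_two {n : ℕ} (hn : 1 ≤ n) :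
    coeff (n + 2) (d⁄dX R (chernExponent α β γ)) =
      β * coeff n (d⁄dX R (chernExponent α β γ)) := by
  simp only [coeff_derivative_chernExponent, if_neg (show n + 2 ≠ 0 by omega),
    if_neg (show n ≠ 0 by omega), Nat.add_mod_right]
  split_ifs with hodd
  · rw [show (n + 2 + 1) / 2 = (n + 1) / 2 + 1 by omega, pow_succ']
  · rw [show (n + 2) / 2 = n / 2 + 1 by omega, show n / 2 + 1 - 1 = n / 2 - 1 + 1 by omega,
      pow_succ', pow_succ']
    ring

theorem one_sub_C_mul_X_sq_mul_derivative_chernExponent :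
    (1 - C β * X ^ 2) * d⁄dX R (chernExponent α β γ) =
      C α + C β * X + 2 * C γ * X ^ 2 := by
  rw [one_sub_C_mul_X_sq_mul_eq fun n hn => coeff_derivative_chernExponent_add_two α β γ hn]
  simp only [coeff_derivative_chernExponent]
  norm_num
  rw [map_ofNat]
  ring

end ChernExponent

/-- Let `R` be a commutative ring containing `ℚ` and `α β γ ∈ R`.  The formal power series
`c(t) = exp[αt + Σ_{n≥2}(αβ^{n-1} + 2γβ^{n-2}) t^{2n-1}/(2n-1) + Σ_{n≥1} β^n t^{2n}/(2n)]`
(whose coefficients are computed from the exponential of the exponent series `E`, namely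
`c_n = Σ_m coeff_n(E^m)/m!`) satisfies the differential equation
`(1 - βt²)·c'(t) = (α + βt + 2γt²)·c(t)`. -/
theorem chern_generating_function_ODE (R : Type*) [CommRing R] [Algebra ℚ R] (α β γ : R) :
    let E : PowerSeries R := PowerSeries.mk fun k =>
      if k = 0 then 0
      else if k = 1 then α
      else if k % 2 = 1 then
        ((k : ℚ)⁻¹) • (α * β ^ ((k - 1) / 2) + 2 * γ * β ^ ((k - 1) / 2 - 1))
      else ((k : ℚ)⁻¹) • β ^ (k / 2)
    let c : PowerSeries R := PowerSeries.mk fun n =>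
      ∑ m ∈ range (n + 1), ((Nat.factorial m : ℚ)⁻¹) • (PowerSeries.coeff n (E ^ m))
    (1 - PowerSeries.C β * PowerSeries.X ^ 2) * PowerSeries.derivativeFun c =
      (PowerSeries.C α + PowerSeries.C β * PowerSeries.X
        + 2 * PowerSeries.C γ * PowerSeries.X ^ 2) * c := by
  intro E c
  have hE : constantCoeff E = 0 := constantCoeff_chernExponent α β γ
  have hODE : (1 - C β * X ^ 2) * d⁄dX R E = C α + C β * X + 2 * C γ * X ^ 2 :=
    one_sub_C_mul_X_sq_mul_derivative_chernExponent α β γ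
  have hc : c = (exp R).subst E := by
    ext n
    rw [coeff_exp_subst hE, coeff_mk]
  change _ * d⁄dX R c = _
  rw [hc, derivative_exp_subst hE, mul_left_comm, hODE, mul_comm]
end

section
/- For each integer g ≥ 2, the rational number (2/g)·C(4g-3, 2g-1) is a positive integer. -/
/-! The number is `2 * catalan (2g - 1)`: combining `(n + 1) catalan n = C(2n, n)` with
`C(2n, n) = 2 C(2n - 1, n)` at `n = 2g - 1` gives `2g catalan (2g - 1) = 2 C(4g - 3, 2g - 1)`. -/

namespace Nat

theorem centralBinom_succ_eq_two_mul_choose (n : ℕ) :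
    centralBinom (n + 1) = 2 * (2 * n + 1).choose (n + 1) := by
  rw [centralBinom_eq_two_mul_choose, show 2 * (n + 1) = 2 * n + 1 + 1 by ring,
    choose_succ_succ', choose_symm_half, ← two_mul]

end Nat

theorem catalan_pos (n : ℕ) : 0 < catalan n :=
  Nat.pos_of_mul_pos_left ((succ_mul_catalan_eq_centralBinom n).symm ▸ n.centralBinom_pos)

theorem succ_succ_mul_catalan_succ (n : ℕ) :
    (n + 2) * catalan (n + 1) = 2 * (2 * n + 1).choose (n + 1) := by
  rw [← Nat.centralBinom_succ_eq_two_mul_choose]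
  exact succ_mul_catalan_eq_centralBinom (n + 1)

/-- For each integer `g ≥ 2`, the rational number `(2/g)·C(4g-3, 2g-1)` (the quaternionic
volume `υ(G_g)` of the real Grassmannian `G_g`) is a positive integer. -/
theorem quaternionic_volume_integral (g : ℕ) (hg : 2 ≤ g) :
    ∃ m : ℕ, 0 < m ∧ (m : ℚ) = 2 / g * Nat.choose (4 * g - 3) (2 * g - 1) := by
  obtain ⟨k, rfl⟩ : ∃ k, g = k + 1 := ⟨g - 1, by omega⟩
  refine ⟨2 * catalan (2 * k + 1), Nat.mul_pos two_pos (catalan_pos _), ?_⟩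
  have hcat := succ_succ_mul_catalan_succ (2 * k)
  rw [show 2 * (2 * k) + 1 = 4 * k + 1 by ring] at hcat
  rw [show 4 * (k + 1) - 3 = 4 * k + 1 by omega, show 2 * (k + 1) - 1 = 2 * k + 1 by omega]
  qify at hcat
  push_cast
  field_simp
  linear_combination (1 / 2 : ℚ) * hcat
end
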